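/- (Log-type Gronwall bootstrap.) Let T > 0, θ ∈ (0,1) and c ≥ 1, and let φ : [0,T] → [0,∞) be a bounded measurable function such that (e + φ(t))^{1/θ} ≤ c + c ∫_0^t (e + φ(s))^{1/θ} log(e + φ(s)) ds for all t ∈ [0,T]. Then log(e + φ(t)) ≤ θ(log c) e^{θct} for all t ∈ [0,T]; in particular, sup_{t∈[0,T]} φ(t) ≤ exp(θ(log c) e^{θcT}) − e. -/
import Mathlib


open MeasureTheory Set

/-- log-type Gronwall bootstrap. If a bounded measurable
`φ : [0,T] → [0,∞)` satisfies
`(e + φ(t))^{1/θ} ≤ c + c ∫_0^t (e + φ(s))^{1/θ} log(e + φ(s)) ds`,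
then `log(e + φ(t)) ≤ θ (log c) e^{θct}`; in particular
`φ(t) ≤ exp(θ (log c) e^{θcT}) - e` on `[0,T]`. -/
theorem statement18 (T θ c : ℝ) (hT : 0 < T) (hθ0 : 0 < θ) (hθ1 : θ < 1) (hc : 1 ≤ c)
    (φ : ℝ → ℝ) (hφ0 : ∀ t, 0 ≤ φ t) (hmeas : Measurable φ)
    (hbdd : ∃ C, ∀ t ∈ Icc (0 : ℝ) T, φ t ≤ C)
    (h : ∀ t ∈ Icc (0 : ℝ) T,
      (Real.exp 1 + φ t) ^ (1 / θ) ≤ c + c * ∫ s in (0 : ℝ)..t,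
        (Real.exp 1 + φ s) ^ (1 / θ) * Real.log (Real.exp 1 + φ s)) :
    (∀ t ∈ Icc (0 : ℝ) T,
      Real.log (Real.exp 1 + φ t) ≤ θ * Real.log c * Real.exp (θ * c * t)) ∧
    ∀ t ∈ Icc (0 : ℝ) T,
      φ t ≤ Real.exp (θ * Real.log c * Real.exp (θ * c * T)) - Real.exp 1 := by
  obtain ⟨C₀, hC₀⟩ := hbdd
  set C := max C₀ 0 with hCdef
  have hC : ∀ t ∈ Icc (0:ℝ) T, φ t ≤ C := fun t ht => le_trans (hC₀ t ht) (le_max_left _ _)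
  have hC0 : (0:ℝ) ≤ C := le_max_right _ _
  have hE1 : (1:ℝ) ≤ Real.exp 1 := Real.one_le_exp zero_le_one
  have hEpos : (0:ℝ) < Real.exp 1 := Real.exp_pos 1
  have hbase : ∀ t, (1:ℝ) ≤ Real.exp 1 + φ t := fun t =>
    le_trans hE1 (le_add_of_nonneg_right (hφ0 t))
  have hbasepos : ∀ t, (0:ℝ) < Real.exp 1 + φ t := fun t => lt_of_lt_of_le one_pos (hbase t)
  have hθinv : (1:ℝ) ≤ 1/θ := by rw [le_div_iff₀ hθ0]; linarith
  set ψ : ℝ → ℝ := fun t => (Real.exp 1 + φ t) ^ ((1:ℝ)/θ) with hψdef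
  have hψ1 : ∀ t, (1:ℝ) ≤ ψ t := by
    intro t
    calc (1:ℝ) = (1:ℝ) ^ ((1:ℝ)/θ) := (Real.one_rpow _).symm
    _ ≤ (Real.exp 1 + φ t) ^ ((1:ℝ)/θ) :=
        Real.rpow_le_rpow zero_le_one (hbase t) (by positivity)
  have hψpos : ∀ t, (0:ℝ) < ψ t := fun t => lt_of_lt_of_le one_pos (hψ1 t)
  have hlogψ : ∀ t, Real.log (Real.exp 1 + φ t) = θ * Real.log (ψ t) := by
    intro t
    rw [hψdef]
    simp only
    rw [Real.log_rpow (hbasepos t)]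
    field_simp
  -- the projection onto [0,T]
  set proj : ℝ → ℝ := fun s => max 0 (min s T) with hprojdef
  have hprojmem : ∀ s, proj s ∈ Icc (0:ℝ) T := by
    intro s
    constructor
    · exact le_max_left _ _
    · exact max_le (le_of_lt hT) (min_le_right _ _)
  have hproj_eq : ∀ s ∈ Icc (0:ℝ) T, proj s = s := by
    intro s hs
    rw [hprojdef]
    simp only
    rw [min_eq_left hs.2, max_eq_right hs.1]
  have hprojmeas : Measurable proj :=
    (continuous_const.max (continuous_id.min continuous_const)).measurable
  -- the clamped integrand
  set fc : ℝ → ℝ := fun s => ψ (proj s) * Real.log (Real.exp 1 + φ (proj s)) with hfcdef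
  have hfc0 : ∀ s, 0 ≤ fc s := by
    intro s
    apply mul_nonneg (le_of_lt (hψpos _))
    exact Real.log_nonneg (hbase _)
  set K : ℝ := (Real.exp 1 + C) ^ ((1:ℝ)/θ) * Real.log (Real.exp 1 + C) with hKdef
  have hfcK : ∀ s, fc s ≤ K := by
    intro s
    have hφC : φ (proj s) ≤ C := hC _ (hprojmem s)
    have h1 : ψ (proj s) ≤ (Real.exp 1 + C) ^ ((1:ℝ)/θ) :=
      Real.rpow_le_rpow (le_of_lt (hbasepos _)) (by linarith) (by positivity)
    have h2 : Real.log (Real.exp 1 + φ (proj s)) ≤ Real.log (Real.exp 1 + C) :=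
      Real.log_le_log (hbasepos _) (by linarith)
    exact mul_le_mul h1 h2 (Real.log_nonneg (hbase _)) (by positivity)
  have hfcmeas : Measurable fc := by
    have hm2 : Measurable fun s : ℝ => Real.exp 1 + φ (proj s) :=
      measurable_const.add (hmeas.comp hprojmeas)
    have hm1 : Measurable fun s : ℝ => (Real.exp 1 + φ (proj s)) ^ ((1:ℝ) / θ) := by
      fun_prop
    exact hm1.mul (Real.measurable_log.comp hm2)
  have hint : ∀ a b : ℝ, IntervalIntegrable fc volume a b := by
    intro a b
    apply IntervalIntegrable.mono_fun' (g := fun _ => K) intervalIntegrable_const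
      hfcmeas.aestronglyMeasurable
    filter_upwards with x
    rw [Real.norm_eq_abs, abs_of_nonneg (hfc0 x)]
    exact hfcK x
  -- G
  set G : ℝ → ℝ := fun t => c + c * ∫ s in (0:ℝ)..t, fc s with hGdef
  have hGcont : Continuous G :=
    continuous_const.add (continuous_const.mul (intervalIntegral.continuous_primitive hint 0))
  have hcpos : (0:ℝ) < c := lt_of_lt_of_le one_pos hc
  have hGc : ∀ t, 0 ≤ t → c ≤ G t := by
    intro t ht
    have : 0 ≤ ∫ s in (0:ℝ)..t, fc s :=
      intervalIntegral.integral_nonneg ht (fun u _ => hfc0 u)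
    rw [hGdef]; simp only
    nlinarith
  have hψG : ∀ t ∈ Icc (0:ℝ) T, ψ t ≤ G t := by
    intro t ht
    have heq : (∫ s in (0:ℝ)..t, ψ s * Real.log (Real.exp 1 + φ s)) = ∫ s in (0:ℝ)..t, fc s := by
      apply intervalIntegral.integral_congr
      intro s hs
      rw [uIcc_of_le ht.1] at hs
      have hsT : s ∈ Icc (0:ℝ) T := ⟨hs.1, le_trans hs.2 ht.2⟩
      simp only [hfcdef, hproj_eq s hsT]
    have := h t ht
    rw [heq] at this
    exact this
  -- c ≥ e
  have hce : Real.exp 1 ≤ c := by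
    have h0 := h 0 ⟨le_refl 0, le_of_lt hT⟩
    rw [intervalIntegral.integral_same] at h0
    have : ψ 0 ≤ c := by rw [hψdef]; simpa using h0
    have h1 : Real.exp 1 ≤ ψ 0 := by
      calc Real.exp 1 = Real.exp 1 ^ (1:ℝ) := (Real.rpow_one _).symm
      _ ≤ Real.exp 1 ^ ((1:ℝ)/θ) := Real.rpow_le_rpow_of_exponent_le hE1 hθinv
      _ ≤ (Real.exp 1 + φ 0) ^ ((1:ℝ)/θ) :=
          Real.rpow_le_rpow (le_of_lt hEpos) (le_add_of_nonneg_right (hφ0 0)) (by positivity)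
    linarith
  have hlogc : 1 ≤ Real.log c := by
    calc (1:ℝ) = Real.log (Real.exp 1) := (Real.log_exp 1).symm
    _ ≤ Real.log c := Real.log_le_log hEpos hce
  -- g and H
  set g : ℝ → ℝ := fun s => G s * Real.log (G s) with hgdef
  have hgmeas : Measurable g := hGcont.measurable.mul hGcont.measurable.log
  have hgcontOn : ContinuousOn g (Icc (0:ℝ) T) := by
    apply ContinuousOn.mul hGcont.continuousOn
    apply ContinuousOn.log hGcont.continuousOn
    intro x hx
    exact ne_of_gt (lt_of_lt_of_le hcpos (hGc x hx.1))
  have hgint : ∀ t ∈ Icc (0:ℝ) T, IntervalIntegrable g volume 0 t := by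
    intro t ht
    apply ContinuousOn.intervalIntegrable
    apply hgcontOn.mono
    rw [uIcc_of_le ht.1]
    exact Icc_subset_Icc le_rfl ht.2
  set H : ℝ → ℝ := fun t => c + (c*θ) * ∫ s in (0:ℝ)..t, g s with hHdef
  have hg0 : ∀ s, 0 ≤ s → 0 ≤ g s := by
    intro s hs
    have h1 := hGc s hs
    have h2 : 0 ≤ Real.log (G s) := Real.log_nonneg (by linarith)
    exact mul_nonneg (by linarith) h2
  have hHc : ∀ t ∈ Icc (0:ℝ) T, c ≤ H t := by
    intro t ht
    have : 0 ≤ ∫ s in (0:ℝ)..t, g s :=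
      intervalIntegral.integral_nonneg ht.1 (fun u hu => hg0 u hu.1)
    have h2 : 0 ≤ c * θ * ∫ s in (0:ℝ)..t, g s :=
      mul_nonneg (mul_nonneg hcpos.le hθ0.le) this
    rw [hHdef]; simp only
    linarith
  have hfg : ∀ s ∈ Icc (0:ℝ) T, fc s ≤ θ * g s := by
    intro s hs
    have hps : proj s = s := hproj_eq s hs
    have h1 : ψ s ≤ G s := hψG s hs
    have h2 : Real.log (ψ s) ≤ Real.log (G s) := Real.log_le_log (hψpos s) h1
    have h3 : 0 ≤ Real.log (ψ s) := Real.log_nonneg (hψ1 s)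
    have h4 : ψ s * Real.log (ψ s) ≤ G s * Real.log (G s) :=
      mul_le_mul h1 h2 h3 (by linarith [hGc s hs.1, hcpos])
    calc fc s = ψ s * Real.log (Real.exp 1 + φ s) := by rw [hfcdef]; simp only [hps]
    _ = ψ s * (θ * Real.log (ψ s)) := by rw [hlogψ]
    _ = θ * (ψ s * Real.log (ψ s)) := by ring
    _ ≤ θ * (G s * Real.log (G s)) := by nlinarith
    _ = θ * g s := by rw [hgdef]
  have hGH : ∀ t ∈ Icc (0:ℝ) T, G t ≤ H t := by
    intro t ht
    have hmono : (∫ s in (0:ℝ)..t, fc s) ≤ ∫ s in (0:ℝ)..t, θ * g s := by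
      apply intervalIntegral.integral_mono_on ht.1 (hint 0 t) ((hgint t ht).const_mul θ)
      intro x hx
      exact hfg x ⟨hx.1, le_trans hx.2 ht.2⟩
    rw [intervalIntegral.integral_const_mul] at hmono
    have h2 := mul_le_mul_of_nonneg_left hmono (le_of_lt hcpos)
    rw [hGdef, hHdef]; simp only
    calc c + c * ∫ s in (0:ℝ)..t, fc s ≤ c + c * (θ * ∫ s in (0:ℝ)..t, g s) := by linarith
    _ = c + c * θ * ∫ s in (0:ℝ)..t, g s := by ring
  -- derivative of H
  have hH' : ∀ b ∈ Icc (0:ℝ) T, HasDerivAt H ((c*θ) * g b) b := by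
    intro b hb
    have hca : ContinuousAt g b := by
      have hG : (0:ℝ) < G b := lt_of_lt_of_le hcpos (hGc b hb.1)
      exact hGcont.continuousAt.mul (ContinuousAt.log hGcont.continuousAt (ne_of_gt hG))
    have hd := intervalIntegral.integral_hasDerivAt_right (hgint b hb)
      hgmeas.stronglyMeasurable.stronglyMeasurableAtFilter hca
    exact (hd.const_mul (c*θ)).const_add c
  -- W := log log H
  set W : ℝ → ℝ := fun t => Real.log (Real.log (H t)) with hWdef
  set W' : ℝ → ℝ := fun t => ((c*θ) * g t / H t) / Real.log (H t) with hW'def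
  have hlogHpos : ∀ t ∈ Icc (0:ℝ) T, 1 ≤ Real.log (H t) := by
    intro t ht
    calc (1:ℝ) ≤ Real.log c := hlogc
    _ ≤ Real.log (H t) := Real.log_le_log hcpos (hHc t ht)
  have hHpos : ∀ t ∈ Icc (0:ℝ) T, 0 < H t := fun t ht => lt_of_lt_of_le hcpos (hHc t ht)
  have hW' : ∀ x ∈ Icc (0:ℝ) T, HasDerivAt W (W' x) x := by
    intro x hx
    have h1 := (hH' x hx).log (ne_of_gt (hHpos x hx))
    have h2 := h1.log (by linarith [hlogHpos x hx])
    exact h2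
  have hbound : ∀ x ∈ Icc (0:ℝ) T, ‖W' x‖ ≤ θ * c := by
    intro x hx
    have hHx := hHpos x hx
    have hlHx := hlogHpos x hx
    have hgx := hg0 x hx.1
    have hW'nonneg : 0 ≤ W' x := by
      rw [hW'def]
      apply div_nonneg (div_nonneg (by positivity) (le_of_lt hHx)) (by linarith)
    rw [Real.norm_eq_abs, abs_of_nonneg hW'nonneg]
    rw [hW'def]; simp only
    rw [div_div, div_le_iff₀ (mul_pos hHx (by linarith))]
    have hle : g x ≤ H x * Real.log (H x) := by
      have h1 : G x ≤ H x := hGH x hx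
      have h2 : Real.log (G x) ≤ Real.log (H x) :=
        Real.log_le_log (lt_of_lt_of_le hcpos (hGc x hx.1)) h1
      have h3 : 0 ≤ Real.log (G x) := Real.log_nonneg (by linarith [hGc x hx.1])
      calc g x = G x * Real.log (G x) := rfl
      _ ≤ H x * Real.log (H x) := mul_le_mul h1 h2 h3 (le_of_lt hHx)
    calc c * θ * g x ≤ c * θ * (H x * Real.log (H x)) :=
      mul_le_mul_of_nonneg_left hle (by positivity)
    _ = θ * c * (H x * Real.log (H x)) := by ring
  -- MVT
  have hMVT : ∀ t ∈ Icc (0:ℝ) T, W t - W 0 ≤ θ * c * t := by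
    intro t ht
    have h0mem : (0:ℝ) ∈ Icc (0:ℝ) T := ⟨le_refl 0, le_of_lt hT⟩
    have := Convex.norm_image_sub_le_of_norm_hasDerivWithin_le
      (fun x hx => (hW' x hx).hasDerivWithinAt) hbound (convex_Icc 0 T) h0mem ht
    rw [Real.norm_eq_abs, Real.norm_eq_abs, sub_zero, abs_of_nonneg ht.1] at this
    calc W t - W 0 ≤ |W t - W 0| := le_abs_self _
    _ ≤ θ * c * t := this
  have hW0 : W 0 = Real.log (Real.log c) := by
    rw [hWdef, hHdef]
    simp [intervalIntegral.integral_same]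
  -- conclusions
  have main : ∀ t ∈ Icc (0:ℝ) T,
      Real.log (Real.exp 1 + φ t) ≤ θ * Real.log c * Real.exp (θ * c * t) := by
    intro t ht
    have h1 : Real.log (Real.log (H t)) ≤ Real.log (Real.log c) + θ * c * t := by
      have h0 := hMVT t ht
      rw [hW0] at h0
      calc Real.log (Real.log (H t)) = W t := rfl
      _ ≤ Real.log (Real.log c) + θ * c * t := by linarith
    have h2 : Real.log (H t) ≤ Real.log c * Real.exp (θ * c * t) := by
      have hlHt : 0 < Real.log (H t) := lt_of_lt_of_le one_pos (hlogHpos t ht)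
      have := Real.exp_le_exp.2 h1
      rw [Real.exp_log hlHt, Real.exp_add, Real.exp_log (by linarith : (0:ℝ) < Real.log c)] at this
      exact this
    have h3 : Real.log (ψ t) ≤ Real.log (H t) :=
      Real.log_le_log (hψpos t) (le_trans (hψG t ht) (hGH t ht))
    calc Real.log (Real.exp 1 + φ t) = θ * Real.log (ψ t) := hlogψ t
    _ ≤ θ * Real.log (H t) := mul_le_mul_of_nonneg_left h3 hθ0.le
    _ ≤ θ * (Real.log c * Real.exp (θ * c * t)) := mul_le_mul_of_nonneg_left h2 hθ0.le
    _ = θ * Real.log c * Real.exp (θ * c * t) := by ring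
  refine ⟨main, ?_⟩
  intro t ht
  have h1 := main t ht
  have h2 : θ * Real.log c * Real.exp (θ * c * t) ≤ θ * Real.log c * Real.exp (θ * c * T) := by
    apply mul_le_mul_of_nonneg_left (Real.exp_le_exp.2 ?_)
      (mul_nonneg hθ0.le (by linarith))
    nlinarith [mul_nonneg (mul_nonneg hθ0.le hcpos.le) (sub_nonneg.2 ht.2)]
  have h3 : Real.exp 1 + φ t ≤ Real.exp (θ * Real.log c * Real.exp (θ * c * T)) := by
    calc Real.exp 1 + φ t = Real.exp (Real.log (Real.exp 1 + φ t)) :=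
      (Real.exp_log (hbasepos t)).symm
    _ ≤ Real.exp (θ * Real.log c * Real.exp (θ * c * T)) := Real.exp_le_exp.2 (by linarith)
  linarith
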